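/- Define $G(r) = \frac{1}{\sqrt{2 r\, c_0(2r)}} + \frac{2 e^{\pi\sqrt 3}\, C\big(\frac{\log 3}{2}\big)\, e^{-\pi/\sinh(r)}}{3\sinh^2(r)}$, where $c_0(L) = h(L) + \frac{1}{2}\sin(2h(L))$ with $h(L) = \arccos(\tanh(L/2))$, and $C(r) = \left(\frac{4\pi}{3}\left(1 - \operatorname{sech}^6(r/2)\right)\right)^{-1/2}$. Then $\sqrt{\pi r}\, G(r) = 1 + \frac{2 r^3}{3\pi} + O(r^5)$ as $r \to 0^+$; that is, there exist $\delta > 0$ and $M > 0$ such that for all $0 < r < \delta$, $\left| \sqrt{\pi r}\, G(r) - 1 - \frac{2r^3}{3\pi} \right| \leq M r^5$. -/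

import Mathlib

open Real

/-- Half the angular width of the standard collar of a geodesic of length `L`. -/
noncomputable def hh (L : ℝ) : ℝ := Real.arccos (Real.tanh (L / 2))

/-- `c₀(L) = h(L) + sin(2h(L))/2`. -/
noncomputable def c₀ (L : ℝ) : ℝ := hh L + Real.sin (2 * hh L) / 2

/-- Teo's function `C(r) = ((4π/3)(1 - sech⁶(r/2)))^{-1/2}`. -/
noncomputable def TeoC (r : ℝ) : ℝ :=
  (Real.sqrt (4 * π / 3 * (1 - (1 / Real.cosh (r / 2)) ^ 6)))⁻¹

/-- The collar bound of Part (4) of Proposition 3.3. -/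
noncomputable def G (r : ℝ) : ℝ :=
  1 / Real.sqrt (2 * r * c₀ (2 * r)) +
    2 * Real.exp (π * Real.sqrt 3) * TeoC (Real.log 3 / 2) * Real.exp (-π / Real.sinh r)
      / (3 * Real.sinh r ^ 2)

/-!
For `L = 2r` we have `h(L) = arccos (tanh r)` and `sin (2h) / 2 = sinh r / cosh² r`, so
`c₀(2r) = arccos (tanh r) + sinh r / cosh² r`, whose derivative is
`-2 sinh² r / cosh³ r = -2 r² + O(r⁴)`. Hence `c₀(2r) = π/2 - 2r³/3 + O(r⁵)`, and the first term
of `√(π r) G(r)` is `(2 c₀(2r) / π)^{-1/2} = 1 + 2r³/(3π) + O(r⁵)`. The second term carries the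
factor `exp (-π / sinh r)`, which is smaller than any power of `r`.
-/

open scoped Nat

namespace Real

lemma sinh_le_mul_cosh {t : ℝ} (ht : 0 ≤ t) : sinh t ≤ t * cosh t := by
  have hderiv (x : ℝ) : HasDerivAt (fun t ↦ t * cosh t - sinh t) (x * sinh x) x := by
    refine (((hasDerivAt_id x).mul (hasDerivAt_cosh x)).sub (hasDerivAt_sinh x)).congr_deriv ?_
    simp only [id, one_mul]
    ring
  have hmono : Monotone fun t ↦ t * cosh t - sinh t :=
    monotone_of_deriv_nonneg (fun x ↦ (hderiv x).differentiableAt) fun x ↦ by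
      rw [(hderiv x).deriv]
      rcases le_total 0 x with hx | hx
      · exact mul_nonneg hx (sinh_nonneg_iff.2 hx)
      · exact mul_nonneg_of_nonpos_of_nonpos hx (sinh_nonpos_iff.2 hx)
  simpa using hmono ht

lemma cosh_le_one_add_sq {t : ℝ} (ht : |t| ≤ 1) : cosh t ≤ 1 + t ^ 2 := by
  have ht2 : t ^ 2 ≤ 1 := by nlinarith [sq_abs t, abs_nonneg t]
  calc cosh t ≤ exp (t ^ 2 / 2) := cosh_le_exp_half_sq t
    _ ≤ 1 / (1 - t ^ 2 / 2) :=
      exp_bound_div_one_sub_of_interval (by positivity) (by linarith)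
    _ ≤ 1 + t ^ 2 := by
      rw [div_le_iff₀ (by linarith)]
      nlinarith [sq_nonneg t]

lemma exp_neg_inv_le_factorial_mul_pow {x : ℝ} (hx : 0 < x) (n : ℕ) :
    exp (-x⁻¹) ≤ n ! * x ^ n := by
  have hpow := pow_div_factorial_le_exp x⁻¹ (inv_nonneg.2 hx.le) n
  calc exp (-x⁻¹) = (exp x⁻¹)⁻¹ := exp_neg _
    _ ≤ (x⁻¹ ^ n / n !)⁻¹ := inv_anti₀ (by positivity) hpow
    _ = n ! * x ^ n := by rw [inv_div, inv_pow, div_inv_eq_mul]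

lemma sqrt_one_sub_tanh_sq (t : ℝ) : √(1 - tanh t ^ 2) = (cosh t)⁻¹ := by
  have hcosh : cosh t ≠ 0 := (cosh_pos t).ne'
  have : 1 - tanh t ^ 2 = (cosh t)⁻¹ ^ 2 := by
    rw [tanh_eq_sinh_div_cosh]
    field_simp
    linarith [cosh_sq_sub_sinh_sq t]
  rw [this, sqrt_sq (by positivity)]

lemma hasDerivAt_tanh (t : ℝ) : HasDerivAt tanh ((cosh t)⁻¹ ^ 2) t := by
  have hcosh : cosh t ≠ 0 := (cosh_pos t).ne'
  have htanh : sinh / cosh = tanh := funext fun x ↦ (tanh_eq_sinh_div_cosh x).symm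
  have hquot := (hasDerivAt_sinh t).div (hasDerivAt_cosh t) hcosh
  rw [htanh] at hquot
  refine hquot.congr_deriv ?_
  field_simp
  linarith [cosh_sq_sub_sinh_sq t]

end Real

lemma c₀_two_mul (t : ℝ) : c₀ (2 * t) = arccos (tanh t) + sinh t / cosh t ^ 2 := by
  have hcosh : cosh t ≠ 0 := (cosh_pos t).ne'
  rw [c₀, hh, mul_div_cancel_left₀ t two_ne_zero, sin_two_mul, sin_arccos,
    cos_arccos (neg_one_lt_tanh t).le (tanh_lt_one t).le, sqrt_one_sub_tanh_sq,
    tanh_eq_sinh_div_cosh]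
  field_simp

lemma hasDerivAt_c₀_two_mul (t : ℝ) :
    HasDerivAt (fun t ↦ c₀ (2 * t)) (-2 * sinh t ^ 2 / cosh t ^ 3) t := by
  have hcosh : cosh t ≠ 0 := (cosh_pos t).ne'
  have harccos := (hasDerivAt_arccos (neg_one_lt_tanh t).ne' (tanh_lt_one t).ne).comp t
    (hasDerivAt_tanh t)
  have hquot := (hasDerivAt_sinh t).div ((hasDerivAt_cosh t).pow 2) (pow_ne_zero 2 hcosh)
  rw [show (fun t ↦ c₀ (2 * t)) = arccos ∘ tanh + sinh / cosh ^ 2 from funext c₀_two_mul]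
  refine (harccos.add hquot).congr_deriv ?_
  simp only [sqrt_one_sub_tanh_sq, Pi.pow_apply, Nat.cast_ofNat]
  field_simp
  ring

lemma abs_sq_sub_sinh_sq_div_cosh_pow_three_le {t : ℝ} (ht0 : 0 ≤ t) (ht1 : t ≤ 1) :
    |t ^ 2 - sinh t ^ 2 / cosh t ^ 3| ≤ 7 * t ^ 4 := by
  set s := sinh t
  set c := cosh t
  have hc1 : 1 ≤ c := one_le_cosh t
  have hts : t ≤ s := self_le_sinh_iff.2 ht0
  have hstc : s ≤ t * c := sinh_le_mul_cosh ht0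
  have hc : c ≤ 1 + t ^ 2 := cosh_le_one_add_sq (by rwa [abs_of_nonneg ht0])
  have hc3 : c ^ 3 ≤ 1 + 7 * t ^ 2 := by
    have ht2 : t ^ 2 ≤ 1 := pow_le_one₀ ht0 ht1
    calc c ^ 3 ≤ (1 + t ^ 2) ^ 3 := by gcongr
      _ ≤ 1 + 7 * t ^ 2 := by
        nlinarith [mul_le_mul_of_nonneg_left ht2 (sq_nonneg t),
          mul_le_mul_of_nonneg_left ht2 (sq_nonneg (t ^ 2))]
  have hnum : |t ^ 2 * c ^ 3 - s ^ 2| ≤ 7 * t ^ 4 := by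
    rw [abs_le]
    constructor
    · nlinarith [mul_le_mul hstc hstc (by linarith) (by positivity), sq_nonneg (t * c),
        mul_le_mul_of_nonneg_left (le_self_pow₀ hc1 (by norm_num : 3 ≠ 0)) (sq_nonneg t)]
    · nlinarith [mul_self_le_mul_self ht0 hts]
  have hc3pos : 0 < c ^ 3 := by positivity
  calc |t ^ 2 - s ^ 2 / c ^ 3| = |(t ^ 2 * c ^ 3 - s ^ 2) / c ^ 3| := by
        congr 1
        field_simp
    _ = |t ^ 2 * c ^ 3 - s ^ 2| / c ^ 3 := by rw [abs_div, abs_of_pos hc3pos]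
    _ ≤ |t ^ 2 * c ^ 3 - s ^ 2| := div_le_self (abs_nonneg _) (one_le_pow₀ hc1)
    _ ≤ 7 * t ^ 4 := hnum

lemma abs_c₀_two_mul_sub_le {r : ℝ} (hr0 : 0 ≤ r) (hr1 : r ≤ 1) :
    |c₀ (2 * r) - (π / 2 - 2 * r ^ 3 / 3)| ≤ 14 * r ^ 5 := by
  set f := fun t ↦ c₀ (2 * t) - (π / 2 - 2 * t ^ 3 / 3)
  have hderiv (t : ℝ) : HasDerivAt f (2 * (t ^ 2 - sinh t ^ 2 / cosh t ^ 3)) t := by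
    have hcube : HasDerivAt (fun t ↦ π / 2 - 2 * t ^ 3 / 3) (-(2 * t ^ 2)) t := by
      refine ((((hasDerivAt_pow 3 t).const_mul 2).div_const 3).const_sub (π / 2)).congr_deriv ?_
      push_cast
      ring
    exact ((hasDerivAt_c₀_two_mul t).sub hcube).congr_deriv (by ring)
  have hf0 : f 0 = 0 := by simp [f, (by simpa using c₀_two_mul 0 : c₀ 0 = π / 2)]
  have hmvt := norm_image_sub_le_of_norm_deriv_le_segment' (C := 14 * r ^ 4)
    (fun t _ ↦ (hderiv t).hasDerivWithinAt) (fun t ht ↦ ?_) r (Set.right_mem_Icc.2 hr0)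
  · rw [hf0, sub_zero, sub_zero, Real.norm_eq_abs] at hmvt
    linarith
  · rw [norm_mul, Real.norm_two, Real.norm_eq_abs]
    have hbound := abs_sq_sub_sinh_sq_div_cosh_pow_three_le ht.1 (by linarith [ht.2])
    have hpow : t ^ 4 ≤ r ^ 4 := pow_le_pow_left₀ ht.1 ht.2.le 4
    linarith

lemma abs_inv_sqrt_one_sub_sub_le {x : ℝ} (hx : |x| ≤ 1 / 2) :
    |(√(1 - x))⁻¹ - 1 - x / 2| ≤ x ^ 2 := by
  obtain ⟨hx₁, hx₂⟩ := abs_le.1 hx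
  set s := √(1 - x)
  have hs2 : s ^ 2 = 1 - x := sq_sqrt (by linarith)
  have hs : 0 < s := sqrt_pos.2 (by linarith)
  have hrepr : s⁻¹ - 1 - x / 2 = x ^ 2 * (s + 2) / (2 * s * (1 + s) ^ 2) := by
    rw [show x = 1 - s ^ 2 by linarith]
    field_simp
    ring
  have hfac : s + 2 ≤ 2 * s * (1 + s) ^ 2 := by nlinarith
  rw [hrepr, abs_of_nonneg (by positivity), div_le_iff₀ (by positivity)]
  exact mul_le_mul_of_nonneg_left hfac (sq_nonneg x)

lemma abs_sqrt_mul_one_div_sqrt_c₀_sub_le {r : ℝ} (hr0 : 0 < r) (hr : r ≤ 1 / 2) :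
    |√(π * r) * (1 / √(2 * r * c₀ (2 * r))) - 1 - 2 * r ^ 3 / (3 * π)| ≤ 10 * r ^ 5 := by
  have hc := abs_c₀_two_mul_sub_le hr0.le (by linarith)
  set e := c₀ (2 * r) - (π / 2 - 2 * r ^ 3 / 3)
  set x := (4 * r ^ 3 / 3 - 2 * e) / π
  have hr2 : r ^ 2 ≤ 1 / 4 := by nlinarith
  have hr3 : r ^ 3 ≤ 1 / 8 := by nlinarith
  have he : |e| ≤ 7 / 2 * r ^ 3 := by nlinarith [pow_pos hr0 3]
  have hx : |x| ≤ 3 * r ^ 3 := by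
    rw [abs_div, abs_of_pos pi_pos, div_le_iff₀ pi_pos]
    calc |4 * r ^ 3 / 3 - 2 * e| ≤ |4 * r ^ 3 / 3| + |2 * e| := abs_sub _ _
      _ ≤ 3 * r ^ 3 * 3 := by
        rw [abs_of_nonneg (by positivity), abs_mul, abs_two]
        linarith [pow_pos hr0 3]
      _ ≤ 3 * r ^ 3 * π := by gcongr; exact pi_gt_three.le
  have hsqrt : √(π * r) * (1 / √(2 * r * c₀ (2 * r))) = (√(1 - x))⁻¹ := by
    rw [mul_one_div, ← sqrt_div (by positivity), ← sqrt_inv]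
    congr 1
    have : c₀ (2 * r) = π / 2 * (1 - x) := by simp only [x, e]; field_simp; ring
    rw [this]
    field_simp
  have hlin : x / 2 - 2 * r ^ 3 / (3 * π) = -e / π := by simp only [x]; field_simp; ring
  calc |√(π * r) * (1 / √(2 * r * c₀ (2 * r))) - 1 - 2 * r ^ 3 / (3 * π)|
      = |((√(1 - x))⁻¹ - 1 - x / 2) + (x / 2 - 2 * r ^ 3 / (3 * π))| := by rw [hsqrt]; ring_nf
    _ ≤ |(√(1 - x))⁻¹ - 1 - x / 2| + |x / 2 - 2 * r ^ 3 / (3 * π)| := abs_add_le _ _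
    _ ≤ x ^ 2 + |e| / 3 := by
      gcongr
      · exact abs_inv_sqrt_one_sub_sub_le (by nlinarith)
      · rw [hlin, abs_div, abs_neg, abs_of_pos pi_pos]
        gcongr
        exact pi_gt_three.le
    _ ≤ 10 * r ^ 5 := by nlinarith [sq_abs x, abs_nonneg x, pow_pos hr0 3]

lemma exp_neg_pi_div_sinh_div_sinh_sq_le {r : ℝ} (hr0 : 0 < r) (hr1 : r ≤ 1) :
    exp (-π / sinh r) / sinh r ^ 2 ≤ 7 ! * 2 ^ 5 * r ^ 5 := by
  set s := sinh r
  have hs : 0 < s := sinh_pos_iff.2 hr0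
  have hs2r : s ≤ 2 * r := by
    have := cosh_le_one_add_sq (by rwa [abs_of_pos hr0])
    nlinarith [sinh_le_mul_cosh hr0.le]
  have hexp : exp (-π / s) ≤ 7 ! * s ^ 7 := by
    refine (exp_le_exp.2 ?_).trans (exp_neg_inv_le_factorial_mul_pow hs 7)
    rw [neg_div, neg_le_neg_iff, ← one_div]
    gcongr
    linarith [pi_gt_three]
  calc exp (-π / s) / s ^ 2 ≤ 7 ! * s ^ 7 / s ^ 2 := by gcongr
    _ = 7 ! * s ^ 5 := by field_simp
    _ ≤ 7 ! * (2 * r) ^ 5 := by gcongr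
    _ = 7 ! * 2 ^ 5 * r ^ 5 := by ring

/-- `√(π r) G(r) = 1 + 2r³/(3π) + O(r⁵)` as `r → 0⁺`. -/
theorem G_asymptotic :
    ∃ δ > (0 : ℝ), ∃ M > (0 : ℝ), ∀ r : ℝ, 0 < r → r < δ →
      |Real.sqrt (π * r) * G r - 1 - 2 * r ^ 3 / (3 * π)| ≤ M * r ^ 5 := by
  set A := 2 * exp (π * √3) * TeoC (log 3 / 2) / 3
  have hA : 0 ≤ A := by unfold A TeoC; positivity
  refine ⟨1 / 2, by norm_num, 10 + 2 * A * (7 ! * 2 ^ 5), by positivity, fun r hr0 hr ↦ ?_⟩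
  have hmain := abs_sqrt_mul_one_div_sqrt_c₀_sub_le hr0 hr.le
  have htail := exp_neg_pi_div_sinh_div_sinh_sq_le hr0 (by linarith)
  have hsqrt : √(π * r) ≤ 2 := sqrt_le_iff.2 ⟨by norm_num, by nlinarith [pi_lt_four]⟩
  have hsplit : √(π * r) * G r - 1 - 2 * r ^ 3 / (3 * π) =
      (√(π * r) * (1 / √(2 * r * c₀ (2 * r))) - 1 - 2 * r ^ 3 / (3 * π)) +
        √(π * r) * (A * (exp (-π / sinh r) / sinh r ^ 2)) := by
    rw [G]
    ring
  calc |√(π * r) * G r - 1 - 2 * r ^ 3 / (3 * π)|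
      ≤ |√(π * r) * (1 / √(2 * r * c₀ (2 * r))) - 1 - 2 * r ^ 3 / (3 * π)| +
          |√(π * r) * (A * (exp (-π / sinh r) / sinh r ^ 2))| := hsplit ▸ abs_add_le _ _
    _ ≤ 10 * r ^ 5 + 2 * (A * (7 ! * 2 ^ 5 * r ^ 5)) := by
      rw [abs_of_nonneg (mul_nonneg (sqrt_nonneg _) (mul_nonneg hA (by positivity)))]
      gcongr
    _ = (10 + 2 * A * (7 ! * 2 ^ 5)) * r ^ 5 := by ring
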